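/- Let p be a prime, k a field of characteristic p, R = k[x, y] the polynomial ring in two variables, and f ∈ R such that the partial derivatives ∂f/∂x, ∂f/∂y form a regular sequence in R. Let B = k[x, y, z]/(z^p − f). Then there exist k-derivations D₁, D₂ of B with D₁(x̄) = 0, D₁(ȳ) = 0, D₁(z̄) = 1 and D₂(x̄) = ∂f/∂y, D₂(ȳ) = −∂f/∂x, D₂(z̄) = 0, and the module of k-derivations of B is a free B-module with basis {D₁, D₂}: every k-derivation D of B can be written uniquely as D = a·D₁ + b·D₂ with a, b ∈ B. -/

import Mathlib

open MvPolynomial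

noncomputable section

/-- The ideal `(zᵖ − f) ⊂ k[x, y, z]`, where `f ∈ k[x, y]` is viewed as a polynomial in
`x, y, z` via the inclusion of the first two variables. -/
def zariskiIdeal (p : ℕ) (k : Type*) [Field k] (f : MvPolynomial (Fin 2) k) :
    Ideal (MvPolynomial (Fin 3) k) :=
  Ideal.span {(X 2 : MvPolynomial (Fin 3) k) ^ p - rename Fin.castSucc f}

/-- The coordinate ring `B = k[x, y, z]/(zᵖ − f)` of a Zariski singularity. -/
def ZariskiRing (p : ℕ) (k : Type*) [Field k] (f : MvPolynomial (Fin 2) k) : Type _ :=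
  MvPolynomial (Fin 3) k ⧸ zariskiIdeal p k f

instance (p : ℕ) (k : Type*) [Field k] (f : MvPolynomial (Fin 2) k) :
    CommRing (ZariskiRing p k f) := Ideal.Quotient.commRing _

instance (p : ℕ) (k : Type*) [Field k] (f : MvPolynomial (Fin 2) k) :
    Algebra k (ZariskiRing p k f) := Ideal.Quotient.algebra k

/-! `B` is the free `k[x, y]`-module `k[x, y][z]/(zᵖ − f)` with basis `1, z̄, …, z̄ᵖ⁻¹`, so the
regular-sequence hypotheses on `(f_x, f_y)` hold coordinatewise in `B`: `f_x` is a nonzerodivisor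
on `B`, and every relation `f_x α + f_y β = 0` in `B` is a multiple of the Koszul relation
`(f_y, −f_x)`. In characteristic `p`, `D(z̄ᵖ) = p z̄ᵖ⁻¹ D z̄ = 0`, so differentiating `z̄ᵖ = f` gives
`f_x D(x̄) + f_y D(ȳ) = 0` for every derivation `D`. Hence `(D x̄, D ȳ) = c (f_y, −f_x)` and
`D = D(z̄) D₁ + c D₂`; the coefficients are read off from the values at `z̄` and `ȳ`. -/

section RegularPair

variable {A : Type*} [CommRing A] {a b : A}

theorem exists_eq_mul_of_mul_add_mul_eq_zero (ha : ∀ r, a * r = 0 → r = 0)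
    (hb : ∀ r, b * r ∈ Ideal.span {a} → r ∈ Ideal.span {a}) {s t : A}
    (h : a * s + b * t = 0) : ∃ c, s = b * c ∧ t = -(a * c) := by
  obtain ⟨c, rfl⟩ : ∃ c, -(a * c) = t := by
    obtain ⟨c, hc⟩ := Ideal.mem_span_singleton'.mp
      (hb t (Ideal.mem_span_singleton'.mpr ⟨-s, by linear_combination -h⟩))
    exact ⟨-c, by linear_combination hc⟩
  exact ⟨c, sub_eq_zero.mp (ha _ (by linear_combination h)), rfl⟩

theorem Module.Free.exists_eq_smul_of_smul_add_smul_eq_zero {M : Type*} [AddCommGroup M]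
    [Module A M] [Module.Free A M] [Module.Finite A M] (ha : ∀ r, a * r = 0 → r = 0)
    (hb : ∀ r, b * r ∈ Ideal.span {a} → r ∈ Ideal.span {a}) {m n : M}
    (h : a • m + b • n = 0) : ∃ c : M, m = b • c ∧ n = -(a • c) := by
  let e := (Module.Free.chooseBasis A M).equivFun
  choose c hc using fun i ↦ exists_eq_mul_of_mul_add_mul_eq_zero ha hb
    (s := e m i) (t := e n i) (by simpa using congr_fun (congrArg e h) i)
  refine ⟨e.symm c, e.injective ?_, e.injective ?_⟩ <;> ext i <;> simp [hc]

end RegularPair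

section Derivations

theorem Derivation.map_mvPolynomial_aeval {σ R S M : Type*} [Fintype σ] [CommSemiring R]
    [CommSemiring S] [Algebra R S] [AddCommMonoid M] [Module R M] [Module S M]
    [IsScalarTower R S M] (D : Derivation R S M) (x : σ → S) (q : MvPolynomial σ R) :
    D (aeval x q) = ∑ i, aeval x (pderiv i q) • D (x i) := by
  induction q using MvPolynomial.induction_on with
  | C r => simp
  | add q r hq hr => simp [hq, hr, add_smul, Finset.sum_add_distrib]
  | mul_X q j hq =>
    classical
    rw [map_mul, aeval_X, Derivation.leibniz, hq, Finset.smul_sum]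
    simp [add_smul, mul_smul, Finset.sum_add_distrib, pderiv_X, Pi.single_apply, smul_comm (x j),
      apply_ite, ite_smul]

variable {R A : Type*} [CommRing R] [CommRing A] [Algebra R A]

def Derivation.liftQuotient (d : Derivation R A A) (I : Ideal A) (hI : Set.MapsTo d I I) :
    Derivation R (A ⧸ I) (A ⧸ I) :=
  Derivation.liftOfSurjective (f := Ideal.Quotient.mkₐ R I) (Ideal.Quotient.mkₐ_surjective R I)
    fun _ hx ↦ Ideal.Quotient.eq_zero_iff_mem.mpr (hI (Ideal.Quotient.eq_zero_iff_mem.mp hx))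

theorem Derivation.liftQuotient_mk (d : Derivation R A A) (I : Ideal A) (hI : Set.MapsTo d I I)
    (a : A) : d.liftQuotient I hI (Ideal.Quotient.mk I a) = Ideal.Quotient.mk I (d a) := by
  unfold Derivation.liftQuotient
  exact Derivation.liftOfSurjective_apply _ _ a

theorem Derivation.mapsTo_span_singleton (d : Derivation R A A) {u : A} (hu : d u = 0) :
    Set.MapsTo d (Ideal.span {u} : Set A) (Ideal.span {u}) := by
  intro x hx
  obtain ⟨t, rfl⟩ := Ideal.mem_span_singleton'.mp hx
  rw [SetLike.mem_coe, Derivation.leibniz, hu, smul_zero, zero_add, smul_eq_mul]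
  exact Ideal.mul_mem_right _ _ (Ideal.mem_span_singleton_self u)

end Derivations

namespace MvPolynomial

def finCastSuccEquiv (R : Type*) [CommRing R] (n : ℕ) :
    MvPolynomial (Fin (n + 1)) R ≃ₐ[R] Polynomial (MvPolynomial (Fin n) R) :=
  (renameEquiv R (finRotate (n + 1))).trans (finSuccEquiv R n)

theorem finCastSuccEquiv_X_last (R : Type*) [CommRing R] (n : ℕ) :
    finCastSuccEquiv R n (X (Fin.last n)) = Polynomial.X := by
  simp [finCastSuccEquiv, renameEquiv_apply, finSuccEquiv_X_zero]

theorem finCastSuccEquiv_rename_castSucc {R : Type*} [CommRing R] {n : ℕ}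
    (q : MvPolynomial (Fin n) R) :
    finCastSuccEquiv R n (rename Fin.castSucc q) = Polynomial.C q := by
  have h : (finCastSuccEquiv R n).toAlgHom.comp (rename Fin.castSucc) = Polynomial.CAlgHom := by
    refine algHom_ext fun j ↦ ?_
    have hj : finRotate (n + 1) j.castSucc = j.succ :=
      Fin.ext (coe_finRotate_of_ne_last (Fin.castSucc_ne_last j))
    simp [finCastSuccEquiv, renameEquiv_apply, hj, finSuccEquiv_X_succ]
  exact congr($h q)

end MvPolynomial

namespace ZariskiRing

variable {p : ℕ} {k : Type*} [Field k] {f : MvPolynomial (Fin 2) k}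

variable (p k f) in
def mk : MvPolynomial (Fin 3) k →ₐ[k] ZariskiRing p k f :=
  Ideal.Quotient.mkₐ k (zariskiIdeal p k f)

local notation "π" => mk p k f

theorem mk_zariski_eq_zero : π (X 2 ^ p - rename Fin.castSucc f) = 0 :=
  Ideal.Quotient.eq_zero_iff_mem.mpr (Ideal.mem_span_singleton_self _)

variable (p k f) in
def equivAdjoinRoot : ZariskiRing p k f ≃ₐ[k] AdjoinRoot (Polynomial.X ^ p - Polynomial.C f) :=
  Ideal.quotientEquivAlg _ _ (finCastSuccEquiv k 2) <| by
    have hz : finCastSuccEquiv k 2 (X 2) = Polynomial.X := finCastSuccEquiv_X_last k 2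
    simp [zariskiIdeal, Ideal.map_span, hz, finCastSuccEquiv_rename_castSucc]

theorem equivAdjoinRoot_mk_rename_mul (r : MvPolynomial (Fin 2) k) (b : ZariskiRing p k f) :
    equivAdjoinRoot p k f (π (rename Fin.castSucc r) * b) = r • equivAdjoinRoot p k f b := by
  rw [map_mul, Algebra.smul_def]
  congr 1
  exact congrArg (AdjoinRoot.mk _) (finCastSuccEquiv_rename_castSucc r)

theorem eq_zero_of_mk_rename_mul_eq_zero (hp : p ≠ 0) {r : MvPolynomial (Fin 2) k}
    (hr : ∀ s, r * s = 0 → s = 0) {b : ZariskiRing p k f}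
    (h : π (rename Fin.castSucc r) * b = 0) : b = 0 := by
  have := (Polynomial.monic_X_pow_sub_C f hp).free_adjoinRoot
  have hreg : IsSMulRegular (MvPolynomial (Fin 2) k) r := fun s t hst ↦
    sub_eq_zero.mp (hr _ (by rw [mul_sub, sub_eq_zero]; exact hst))
  refine (equivAdjoinRoot p k f).injective
    ((hreg.of_flat (S := AdjoinRoot _)).right_eq_zero_of_smul ?_)
  rw [smul_eq_mul, ← Algebra.smul_def, ← equivAdjoinRoot_mk_rename_mul, h, map_zero]

theorem exists_eq_mk_rename_mul (hp : p ≠ 0) {a b : MvPolynomial (Fin 2) k}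
    (ha : ∀ r, a * r = 0 → r = 0) (hb : ∀ r, b * r ∈ Ideal.span {a} → r ∈ Ideal.span {a})
    {s t : ZariskiRing p k f}
    (h : π (rename Fin.castSucc a) * s + π (rename Fin.castSucc b) * t = 0) :
    ∃ c, s = π (rename Fin.castSucc b) * c ∧ t = -(π (rename Fin.castSucc a) * c) := by
  have := (Polynomial.monic_X_pow_sub_C f hp).free_adjoinRoot
  have := (Polynomial.monic_X_pow_sub_C f hp).finite_adjoinRoot
  let e := equivAdjoinRoot p k f
  obtain ⟨c, hs, ht⟩ := Module.Free.exists_eq_smul_of_smul_add_smul_eq_zero ha hb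
    (m := e s) (n := e t) (by
      rw [← equivAdjoinRoot_mk_rename_mul, ← equivAdjoinRoot_mk_rename_mul, ← map_add, h,
        map_zero])
  refine ⟨e.symm c, e.injective ?_, e.injective ?_⟩ <;>
    simp [e, equivAdjoinRoot_mk_rename_mul, hs, ht]

theorem pderiv_castSucc_zariski (j : Fin 2) :
    pderiv j.castSucc (X 2 ^ p - rename Fin.castSucc f : MvPolynomial (Fin 3) k) =
      -rename Fin.castSucc (pderiv j f) := by
  rw [map_sub, Derivation.leibniz_pow, pderiv_X_of_ne (by fin_cases j <;> decide),
    pderiv_rename (Fin.castSucc_injective 2)]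
  simp

theorem pderiv_zero_zariski :
    pderiv 0 (X 2 ^ p - rename Fin.castSucc f : MvPolynomial (Fin 3) k) =
      -rename Fin.castSucc (pderiv 0 f) :=
  pderiv_castSucc_zariski 0

theorem pderiv_one_zariski :
    pderiv 1 (X 2 ^ p - rename Fin.castSucc f : MvPolynomial (Fin 3) k) =
      -rename Fin.castSucc (pderiv 1 f) :=
  pderiv_castSucc_zariski 1

theorem pderiv_two_zariski [CharP k p] :
    pderiv 2 (X 2 ^ p - rename Fin.castSucc f : MvPolynomial (Fin 3) k) = 0 := by
  have hf : pderiv 2 (rename Fin.castSucc f : MvPolynomial (Fin 3) k) = 0 := by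
    refine pderiv_eq_zero_of_notMem_vars fun h ↦ ?_
    obtain ⟨j, -, hj⟩ := Finset.mem_image.mp (vars_rename _ _ h)
    exact Fin.castSucc_ne_last j hj
  simp [hf, Derivation.leibniz_pow]

theorem derivation_mk (D : Derivation k (ZariskiRing p k f) (ZariskiRing p k f))
    (q : MvPolynomial (Fin 3) k) : D (π q) = ∑ i, π (pderiv i q) * D (π (X i)) := by
  have hπ (q' : MvPolynomial (Fin 3) k) : aeval (fun i ↦ π (X i)) q' = π q' :=
    congr($(aeval_unique (mk p k f)) q').symm
  simpa only [hπ, smul_eq_mul] using D.map_mvPolynomial_aeval (fun i ↦ π (X i)) q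

theorem derivation_ext {D E : Derivation k (ZariskiRing p k f) (ZariskiRing p k f)}
    (h : ∀ i, D (π (X i)) = E (π (X i))) : D = E := by
  ext b
  obtain ⟨q, rfl⟩ : ∃ q, π q = b := Ideal.Quotient.mkₐ_surjective k _ b
  rw [derivation_mk, derivation_mk E]
  simp only [h]

theorem mul_derivation_add_mul_derivation_eq_zero [CharP k p]
    (D : Derivation k (ZariskiRing p k f) (ZariskiRing p k f)) :
    π (rename Fin.castSucc (pderiv 0 f)) * D (π (X 0)) +
      π (rename Fin.castSucc (pderiv 1 f)) * D (π (X 1)) = 0 := by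
  have h := congrArg D (mk_zariski_eq_zero (p := p) (f := f))
  rw [derivation_mk, Fin.sum_univ_three, map_zero, pderiv_zero_zariski, pderiv_one_zariski,
    pderiv_two_zariski] at h
  simp only [map_neg, map_zero, zero_mul, add_zero, neg_mul] at h
  linear_combination -h

variable (p k f) in
def derivZ [CharP k p] : Derivation k (ZariskiRing p k f) (ZariskiRing p k f) :=
  (pderiv 2).liftQuotient _ ((pderiv 2).mapsTo_span_singleton pderiv_two_zariski)

theorem derivZ_mk [CharP k p] (q : MvPolynomial (Fin 3) k) :
    derivZ p k f (π q) = π (pderiv 2 q) :=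
  Derivation.liftQuotient_mk _ _ _ q

variable (f) in
def hamiltonianMv : Derivation k (MvPolynomial (Fin 3) k) (MvPolynomial (Fin 3) k) :=
  rename Fin.castSucc (pderiv 1 f) • pderiv 0 - rename Fin.castSucc (pderiv 0 f) • pderiv 1

theorem hamiltonianMv_zariski :
    hamiltonianMv f (X 2 ^ p - rename Fin.castSucc f : MvPolynomial (Fin 3) k) = 0 := by
  simp only [hamiltonianMv, Derivation.sub_apply, Derivation.smul_apply, smul_eq_mul,
    pderiv_zero_zariski, pderiv_one_zariski]
  ring

variable (p k f) in
def hamiltonian : Derivation k (ZariskiRing p k f) (ZariskiRing p k f) :=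
  (hamiltonianMv f).liftQuotient _ ((hamiltonianMv f).mapsTo_span_singleton hamiltonianMv_zariski)

theorem hamiltonian_mk (q : MvPolynomial (Fin 3) k) :
    hamiltonian p k f (π q) = π (hamiltonianMv f q) :=
  Derivation.liftQuotient_mk _ _ _ q

end ZariskiRing

open ZariskiRing

/-- **The tangent module of a Zariski singularity is free of rank 2.** Let `p` be a prime,
`k` a field of characteristic `p`, and `f ∈ k[x, y]` with `(∂f/∂x, ∂f/∂y)` a regular
sequence. In `B = k[x, y, z]/(zᵖ − f)` there are derivations `D₁ = ∂/∂z` and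
`D₂ = (∂f/∂y)∂/∂x − (∂f/∂x)∂/∂y`, and every `k`-derivation of `B` is uniquely
`a·D₁ + b·D₂` with `a, b ∈ B`. -/
theorem zariski_singularity_tangent_module_free
    (p : ℕ) (hp : p.Prime) (k : Type*) [Field k] [CharP k p]
    (f : MvPolynomial (Fin 2) k)
    (hreg1 : ∀ r : MvPolynomial (Fin 2) k, pderiv 0 f * r = 0 → r = 0)
    (hreg2 : ∀ r : MvPolynomial (Fin 2) k,
      pderiv 1 f * r ∈ Ideal.span {pderiv 0 f} → r ∈ Ideal.span {pderiv 0 f}) :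
    ∃ D₁ D₂ : Derivation k (ZariskiRing p k f) (ZariskiRing p k f),
      D₁ (Ideal.Quotient.mk (zariskiIdeal p k f) (X 0)) = 0 ∧
      D₁ (Ideal.Quotient.mk (zariskiIdeal p k f) (X 1)) = 0 ∧
      D₁ (Ideal.Quotient.mk (zariskiIdeal p k f) (X 2)) = 1 ∧
      D₂ (Ideal.Quotient.mk (zariskiIdeal p k f) (X 0)) =
        Ideal.Quotient.mk (zariskiIdeal p k f) (rename Fin.castSucc (pderiv 1 f)) ∧
      D₂ (Ideal.Quotient.mk (zariskiIdeal p k f) (X 1)) =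
        - Ideal.Quotient.mk (zariskiIdeal p k f) (rename Fin.castSucc (pderiv 0 f)) ∧
      D₂ (Ideal.Quotient.mk (zariskiIdeal p k f) (X 2)) = 0 ∧
      ∀ D : Derivation k (ZariskiRing p k f) (ZariskiRing p k f),
        ∃! ab : ZariskiRing p k f × ZariskiRing p k f, D = ab.1 • D₁ + ab.2 • D₂ := by
  obtain ⟨hZx, hZy, hZz⟩ : derivZ p k f (mk p k f (X 0)) = 0 ∧
      derivZ p k f (mk p k f (X 1)) = 0 ∧ derivZ p k f (mk p k f (X 2)) = 1 := by
    simp [derivZ_mk]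
  obtain ⟨hHx, hHy, hHz⟩ : hamiltonian p k f (mk p k f (X 0)) =
        mk p k f (rename Fin.castSucc (pderiv 1 f)) ∧
      hamiltonian p k f (mk p k f (X 1)) = -mk p k f (rename Fin.castSucc (pderiv 0 f)) ∧
      hamiltonian p k f (mk p k f (X 2)) = 0 := by
    simp [hamiltonian_mk, hamiltonianMv]
  refine ⟨derivZ p k f, hamiltonian p k f, hZx, hZy, hZz, hHx, hHy, hHz, fun D ↦ ?_⟩
  obtain ⟨c, hx, hy⟩ := exists_eq_mk_rename_mul hp.ne_zero hreg1 hreg2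
    (mul_derivation_add_mul_derivation_eq_zero D)
  refine ⟨(D (mk p k f (X 2)), c), derivation_ext fun i ↦ ?_, ?_⟩
  · fin_cases i <;> simp [hZx, hZy, hZz, hHx, hHy, hHz, hx, hy, mul_comm]
  · rintro ⟨a, b⟩ rfl
    simp only [Derivation.coe_add, Derivation.coe_smul, Pi.add_apply, Pi.smul_apply, hZy, hHy,
      smul_eq_mul, mul_zero, mul_neg, zero_add, neg_inj] at hy
    refine Prod.ext (by simp [hZz, hHz]) (sub_eq_zero.mp ?_)
    exact eq_zero_of_mk_rename_mul_eq_zero hp.ne_zero hreg1 (by linear_combination hy)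

end
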